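/- Let G be a maximally connected graph (κ(G) = δ(G)) with δ(G) ≥ 3, |V(G)| ≥ 2(δ(G)−h)+3, and suppose the maximum number C(G) of common neighbors of any two distinct vertices of G satisfies C(G) ≤ δ(G) − 2. Then t_h^e(G) = δ(G) − h under the MM* model for 0 ≤ h ≤ ⌊(δ(G)−1)/2⌋. -/

import Mathlib

open SimpleGraph Finset

variable {V : Type*}

/-- The vertex connectivity of a finite simple graph: the minimum size of a vertex set
whose removal leaves a graph that is disconnected or has at most one vertex. -/
noncomputable def vConn [Fintype V] (G : SimpleGraph V) : ℕ :=
  sInf {n | ∃ S : Finset V, S.card = n ∧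
    (((↑S : Set V)ᶜ).Subsingleton ∨ ¬ (G.induce ((↑S : Set V)ᶜ)).Connected)}


/-- Two fault sets are distinguishable under the MM* model (Sengupta–Dahbura). -/
def mmDistinguishable [DecidableEq V] (G : SimpleGraph V) (F1 F2 : Finset V) : Prop :=
  (∃ u w v : V, u ∉ F1 ∪ F2 ∧ w ∉ F1 ∪ F2 ∧ v ∈ (F1 \ F2) ∪ (F2 \ F1) ∧ G.Adj u v ∧ G.Adj u w) ∨
  (∃ u v w : V, u ∈ F1 \ F2 ∧ v ∈ F1 \ F2 ∧ u ≠ v ∧ w ∉ F1 ∪ F2 ∧ G.Adj u w ∧ G.Adj v w) ∨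
  (∃ u v w : V, u ∈ F2 \ F1 ∧ v ∈ F2 \ F1 ∧ u ≠ v ∧ w ∉ F1 ∪ F2 ∧ G.Adj u w ∧ G.Adj v w)

/-- A graph is $s$-diagnosable under the MM* model. -/
def mmDiagnosable [DecidableEq V] (G : SimpleGraph V) (s : ℕ) : Prop :=
  ∀ F1 F2 : Finset V, F1 ≠ F2 → F1.card ≤ s → F2.card ≤ s → mmDistinguishable G F1 F2

/-- The $h$-edge tolerable diagnosability under the MM* model. -/
noncomputable def mmTolDiag [Fintype V] [DecidableEq V] (G : SimpleGraph V) (h : ℕ) : ℕ :=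
  sSup {s | ∀ Fe : Finset (Sym2 V), ↑Fe ⊆ G.edgeSet → Fe.card ≤ h →
    mmDiagnosable (G.deleteEdges ↑Fe) s}

/-! For the upper bound, deleting `h` edges at a vertex `u` of minimum degree makes `N(u)` and
`N(u) ∪ {u}` indistinguishable. For the lower bound, let `H = G - F_e` and let `F₁ ≠ F₂` be
indistinguishable of size at most `δ - h`. Each deleted edge lowers the connectivity by at most one,
so `H - (F₁ ∩ F₂)` is connected, and this forces the set `U` of vertices outside `F₁ ∪ F₂` to be
independent. So every `u ∈ U` has all its neighbours in `F₁ ∪ F₂`, at most one of them in each of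
`F₁ \ F₂` and `F₂ \ F₁`. Counting the edges between `U` and `F₁ ∪ F₂` from both sides (the degree
deficiency of `H` is at most `2h`, and two vertices of `U` have at most `δ - 2` common neighbours),
Cauchy–Schwarz contradicts `|V| ≥ 2(δ - h) + 3`. -/

namespace SimpleGraph

theorem Preconnected.isIndepSet_of_not_adj_of_adj {H : SimpleGraph V} (hH : H.Preconnected)
    {A : Set V} (hA : ∃ b, b ∉ A)
    (hmix : ∀ ⦃x y z⦄, x ∈ A → y ∉ A → z ∈ A → H.Adj x y → ¬ H.Adj x z) :
    H.IsIndepSet A := by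
  obtain ⟨b, hb⟩ := hA
  have key : ∀ x y (p : H.Walk x y), y ∉ A → x ∈ A → ∀ z ∈ A, ¬ H.Adj x z := by
    intro x y p
    induction p with
    | nil => exact fun hy hx _ _ _ => hy hx
    | @cons x y _ hxy p ih =>
      intro hw hx z hz hxz
      by_cases hy : y ∈ A
      · exact ih hw hy x hx hxy.symm
      · exact hmix hx hy hz hxy hxz
  intro x hx z hz _
  exact key x b (hH x b).some hb hx z hz

theorem induce_deleteEdges_singleton_of_notMem {H : SimpleGraph V} {A : Set V} {x : V}
    (hx : x ∉ A) (y : V) : (H.deleteEdges {s(x, y)}).induce A = H.induce A := by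
  ext a b
  simp only [comap_adj, Function.Embedding.coe_subtype, deleteEdges_adj,
    Set.mem_singleton_iff, and_iff_left_iff_imp]
  rintro - hab
  rcases Sym2.mem_iff.mp (hab ▸ Sym2.mem_mk_left x y : x ∈ s(↑a, ↑b)) with rfl | rfl
  exacts [hx a.2, hx b.2]

theorem connected_induce_compl_deleteEdges_singleton [Fintype V] [DecidableEq V]
    {H : SimpleGraph V} {k : ℕ} (hk : k + 2 < Fintype.card V)
    (hH : ∀ T : Finset V, #T ≤ k + 1 → (H.induce (↑T : Set V)ᶜ).Connected)
    (e : Sym2 V) {T : Finset V} (hT : #T ≤ k) :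
    ((H.deleteEdges {e}).induce (↑T : Set V)ᶜ).Connected := by
  induction e using Sym2.ind with | _ x y => ?_
  by_cases hxy : x = y
  · subst hxy
    rw [deleteEdges_eq_self.mpr (Set.disjoint_singleton_right.mpr
      fun he => (H.mem_edgeSet.mp he).ne rfl)]
    exact hH T (by omega)
  by_cases hx : x ∈ T
  · rw [induce_deleteEdges_singleton_of_notMem (by simpa using hx)]
    exact hH T (by omega)
  by_cases hy : y ∈ T
  · rw [Sym2.eq_swap, induce_deleteEdges_singleton_of_notMem (by simpa using hy)]
    exact hH T (by omega)
  -- Each of `(T + x)ᶜ`, `(T + y)ᶜ` misses an end of the deleted edge, and together they cover `Tᶜ`.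
  have hunion : ((↑(insert x T) : Set V)ᶜ) ∪ (↑(insert y T))ᶜ = (↑T)ᶜ := by
    ext a
    simp only [coe_insert, Set.mem_union, Set.mem_compl_iff, Set.mem_insert_iff, mem_coe]
    constructor
    · tauto
    · intro ha
      by_cases hax : a = x
      · exact Or.inr (by rintro (rfl | h) <;> [exact hxy hax.symm; exact ha h])
      · exact Or.inl (by tauto)
  have hinter : ((↑(insert x T) : Set V)ᶜ ∩ (↑(insert y T))ᶜ).Nonempty := by
    obtain ⟨a, ha⟩ : (insert x (insert y T))ᶜ.Nonempty := by
      rw [← card_pos, card_compl]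
      have := card_insert_le x (insert y T)
      have := card_insert_le y T
      omega
    refine ⟨a, ?_, ?_⟩ <;> simp only [mem_compl, mem_insert, not_or] at ha <;> simp [ha]
  rw [← hunion]
  refine induce_union_connected ?_ ?_ hinter
  · rw [induce_deleteEdges_singleton_of_notMem (by simp)]
    exact (hH _ ((card_insert_le _ _).trans (by omega))).preconnected
  · rw [Sym2.eq_swap, induce_deleteEdges_singleton_of_notMem (by simp)]
    exact (hH _ ((card_insert_le _ _).trans (by omega))).preconnected

theorem card_edgeFinset_le_card_edgeFinset_deleteEdges_add [Fintype V] [DecidableEq V]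
    (G : SimpleGraph V) [DecidableRel G.Adj] (Fe : Finset (Sym2 V))
    [DecidableRel (G.deleteEdges ↑Fe).Adj] :
    #G.edgeFinset ≤ #(G.deleteEdges ↑Fe).edgeFinset + #Fe := by
  refine (card_le_card fun e he => ?_).trans (card_union_le _ _)
  rw [mem_union, mem_edgeFinset, edgeSet_deleteEdges, Set.mem_sdiff, mem_coe]
  by_cases heF : e ∈ Fe
  · exact Or.inr heF
  · exact Or.inl ⟨mem_edgeFinset.mp he, heF⟩

theorem sum_minDegree_sub_degree_le_of_le [Fintype V] [DecidableEq V]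
    {G G' : SimpleGraph V} [DecidableRel G.Adj] [DecidableRel G'.Adj] (hle : G' ≤ G) :
    ∑ u, (G.minDegree - G'.degree u) ≤ 2 * #G.edgeFinset - 2 * #G'.edgeFinset := by
  calc ∑ u, (G.minDegree - G'.degree u) ≤ ∑ u, (G.degree u - G'.degree u) :=
        sum_le_sum fun u _ => Nat.sub_le_sub_right (G.minDegree_le_degree u) _
    _ = 2 * #G.edgeFinset - 2 * #G'.edgeFinset := by
        rw [sum_tsub_distrib _ fun u _ => degree_le_of_le hle, sum_degrees_eq_twice_card_edges,
          sum_degrees_eq_twice_card_edges]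

theorem sum_minDegree_sub_degree_deleteEdges_le [Fintype V] [DecidableEq V]
    (G : SimpleGraph V) [DecidableRel G.Adj] (Fe : Finset (Sym2 V))
    [DecidableRel (G.deleteEdges ↑Fe).Adj] :
    ∑ u, (G.minDegree - (G.deleteEdges ↑Fe).degree u) ≤ 2 * #Fe := by
  have := card_edgeFinset_le_card_edgeFinset_deleteEdges_add G Fe
  have := sum_minDegree_sub_degree_le_of_le (deleteEdges_le (G := G) ↑Fe)
  omega

theorem sum_degree_eq_sum_card_filter_adj [Fintype V] {H : SimpleGraph V} [DecidableRel H.Adj]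
    {U Q : Finset V} (hN : ∀ u ∈ U, H.neighborFinset u ⊆ Q) :
    ∑ u ∈ U, H.degree u = ∑ x ∈ Q, #{u ∈ U | H.Adj u x} := by
  refine (sum_congr rfl fun u hu => ?_).trans
    (sum_card_bipartiteAbove_eq_sum_card_bipartiteBelow H.Adj)
  rw [← card_neighborFinset_eq_degree]
  congr 1
  ext x
  rw [mem_bipartiteAbove, mem_neighborFinset]
  exact (and_iff_right_of_imp fun hux => hN u hu ((mem_neighborFinset _ _ _).mpr hux)).symm

theorem sum_card_offDiag_filter_adj_le [Fintype V] [DecidableEq V] {H : SimpleGraph V}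
    [DecidableRel H.Adj] {K : ℕ}
    (hK : ∀ u v, u ≠ v → #(H.neighborFinset u ∩ H.neighborFinset v) ≤ K) (U Q : Finset V) :
    ∑ x ∈ Q, #{u ∈ U | H.Adj u x}.offDiag ≤ #U.offDiag * K := by
  let r : V → V × V → Prop := fun x p => H.Adj p.1 x ∧ H.Adj p.2 x
  calc ∑ x ∈ Q, #{u ∈ U | H.Adj u x}.offDiag = ∑ x ∈ Q, #(U.offDiag.bipartiteAbove r x) := by
        refine sum_congr rfl fun x _ => congrArg card ?_
        ext p
        simp only [mem_offDiag, mem_filter, mem_bipartiteAbove, r]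
        tauto
    _ = ∑ p ∈ U.offDiag, #(Q.bipartiteBelow r p) :=
        sum_card_bipartiteAbove_eq_sum_card_bipartiteBelow r
    _ ≤ ∑ _p ∈ U.offDiag, K := by
        refine sum_le_sum fun p hp => (card_le_card fun x hx => ?_).trans
          (hK p.1 p.2 (mem_offDiag.mp hp).2.2)
        rw [mem_bipartiteBelow] at hx
        simp only [mem_inter, mem_neighborFinset]
        exact hx.2
    _ = #U.offDiag * K := by rw [sum_const, smul_eq_mul]

end SimpleGraph

theorem connected_induce_compl_of_card_lt_vConn [Fintype V] (G : SimpleGraph V)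
    {T : Finset V} (hT : #T < vConn G) : (G.induce (↑T : Set V)ᶜ).Connected := by
  by_contra hdis
  exact hT.not_ge (Nat.sInf_le ⟨T, rfl, Or.inr hdis⟩)

theorem vConn_le_card_sub_one [Fintype V] (G : SimpleGraph V) :
    vConn G ≤ Fintype.card V - 1 := by
  classical
  rcases isEmpty_or_nonempty V with hV | ⟨⟨v⟩⟩
  · exact Nat.sInf_le ⟨∅, by simp, Or.inl Set.subsingleton_of_subsingleton⟩
  · refine Nat.sInf_le ⟨univ.erase v, by simp [card_erase_of_mem], Or.inl ?_⟩
    exact Set.subsingleton_singleton.anti fun x hx => by simpa using hx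

theorem connected_induce_compl_deleteEdges [Fintype V] [DecidableEq V] (G : SimpleGraph V)
    (Fe : Finset (Sym2 V)) {T : Finset V} (hT : #T + #Fe < vConn G) :
    ((G.deleteEdges ↑Fe).induce (↑T : Set V)ᶜ).Connected := by
  induction Fe using Finset.induction_on generalizing T with
  | empty => simpa using connected_induce_compl_of_card_lt_vConn G (by simpa using hT)
  | insert e Fe he ih =>
    rw [card_insert_of_notMem he] at hT
    rw [coe_insert, ← Set.union_singleton, ← deleteEdges_deleteEdges]
    have := vConn_le_card_sub_one G
    exact connected_induce_compl_deleteEdges_singleton (k := #T) (by omega)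
      (fun T' hT' => ih (by omega)) e le_rfl

theorem Finset.card_inter_lt_of_ne [DecidableEq V] {F1 F2 : Finset V} {k : ℕ} (hne : F1 ≠ F2)
    (h1 : #F1 ≤ k) (h2 : #F2 ≤ k) : #(F1 ∩ F2) < k := by
  rcases (inter_subset_left : F1 ∩ F2 ⊆ F1).eq_or_ssubset with heq | hlt
  · rw [heq]
    exact (card_lt_card ((inter_eq_left.mp heq).ssubset_of_ne hne)).trans_le h2
  · exact (card_lt_card hlt).trans_le h1

section Indistinguishable

variable [DecidableEq V] {H : SimpleGraph V} {F1 F2 : Finset V}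

theorem mmDiagnosable.of_le {s t : ℕ} (hs : mmDiagnosable H s) (hts : t ≤ s) :
    mmDiagnosable H t :=
  fun F1 F2 hne h1 h2 => hs F1 F2 hne (h1.trans hts) (h2.trans hts)

theorem not_adj_of_not_mmDistinguishable (hnd : ¬ mmDistinguishable H F1 F2) (hne : F1 ≠ F2)
    (hconn : (H.induce (↑(F1 ∩ F2) : Set V)ᶜ).Preconnected) {u v : V}
    (hu : u ∉ F1 ∪ F2) (hv : v ∉ F1 ∪ F2) : ¬ H.Adj u v := by
  have hind := hconn.isIndepSet_of_not_adj_of_adj (A := {x | ↑x ∉ F1 ∪ F2}) ?_ ?_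
  · intro huv
    refine hind (x := ⟨u, by simp_all⟩) hu (y := ⟨v, by simp_all⟩) hv
      (fun h => huv.ne (congrArg Subtype.val h)) huv
  · obtain ⟨x, hx⟩ : ∃ x, ¬ (x ∈ F1 ↔ x ∈ F2) := by
      by_contra! h
      exact hne (Finset.ext h)
    exact ⟨⟨x, by simp; tauto⟩, by simp; tauto⟩
  · intro x y z hx hy hz hxy hxz
    refine hnd (Or.inl ⟨x, z, y, hx, hz, ?_, hxy, hxz⟩)
    have hyS := y.2
    have hyQ : (y : V) ∈ F1 ∪ F2 := not_not.mp hy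
    simp only [Set.mem_compl_iff, mem_coe, mem_inter] at hyS
    simp only [mem_union, mem_sdiff] at hyQ ⊢
    tauto

theorem degree_le_card_inter_add_two_of_not_mmDistinguishable [Fintype V] [DecidableRel H.Adj]
    (hnd : ¬ mmDistinguishable H F1 F2) {u : V} (hu : u ∉ F1 ∪ F2)
    (hN : H.neighborFinset u ⊆ F1 ∪ F2) : H.degree u ≤ #(F1 ∩ F2) + 2 := by
  have atMostOne : ∀ D : Finset V, ¬ (∃ x y w, x ∈ D ∧ y ∈ D ∧ x ≠ y ∧ w ∉ F1 ∪ F2 ∧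
      H.Adj x w ∧ H.Adj y w) → #{x ∈ D | H.Adj u x} ≤ 1 := by
    intro D hD
    refine card_le_one.mpr fun x hx y hy => by_contra fun hxy => hD ?_
    rw [mem_filter] at hx hy
    exact ⟨x, y, u, hx.1, hy.1, hxy, hu, hx.2.symm, hy.2.symm⟩
  have hsplit : H.neighborFinset u ⊆
      (F1 ∩ F2) ∪ {x ∈ F1 \ F2 | H.Adj u x} ∪ {x ∈ F2 \ F1 | H.Adj u x} := by
    intro x hx
    have hxQ := hN hx
    rw [mem_neighborFinset] at hx
    simp only [mem_union, mem_inter, mem_filter, mem_sdiff, hx, and_true] at hxQ ⊢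
    tauto
  have h1 := atMostOne (F1 \ F2) fun h => hnd (Or.inr (Or.inl h))
  have h2 := atMostOne (F2 \ F1) fun h => hnd (Or.inr (Or.inr h))
  have h3 := card_union_le ((F1 ∩ F2) ∪ {x ∈ F1 \ F2 | H.Adj u x}) {x ∈ F2 \ F1 | H.Adj u x}
  have h4 := card_union_le (F1 ∩ F2) {x ∈ F1 \ F2 | H.Adj u x}
  rw [← card_neighborFinset_eq_degree]
  have := card_le_card hsplit
  omega

theorem not_mmDistinguishable_neighborFinset_insert [Fintype V] [DecidableRel H.Adj] (u : V) :
    ¬ mmDistinguishable H (H.neighborFinset u) (insert u (H.neighborFinset u)) := by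
  have hu : u ∉ H.neighborFinset u := by simp
  have h12 : H.neighborFinset u \ insert u (H.neighborFinset u) = ∅ :=
    sdiff_eq_empty_iff_subset.mpr (subset_insert _ _)
  have h21 : insert u (H.neighborFinset u) \ H.neighborFinset u = {u} := by
    rw [insert_sdiff_of_notMem _ hu, Finset.sdiff_self, insert_empty]
  rintro (⟨a, w, v, ha, -, hv, hav, -⟩ | ⟨x, -, -, hx, -⟩ | ⟨x, y, -, hx, hy, hxy, -⟩)
  · rw [h12, h21, empty_union, mem_singleton] at hv
    subst hv
    exact ha (mem_union_left _ ((mem_neighborFinset _ _ _).mpr hav.symm))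
  · simp [h12] at hx
  · rw [h21, mem_singleton] at hx hy
    exact hxy (hx.trans hy.symm)

end Indistinguishable

-- `p = #U`, `s = #(F₁ ∩ F₂)`, `q = #(F₁ ∪ F₂)`, `M` counts the edges between `U` and `F₁ ∪ F₂`,
-- and `SQ = ∑ₓ #(N(x) ∩ U)²` over `x ∈ F₁ ∪ F₂`.
theorem counting_contradiction {δ h s q p M SQ : ℕ} (hδ : 3 ≤ δ) (hh : 2 * h < δ)
    (hs : s + h < δ) (hq : q + s ≤ 2 * (δ - h)) (hp : 2 * (δ - h) + 3 ≤ p + q)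
    (hCS : M ^ 2 ≤ q * SQ) (hpairs : SQ ≤ (p * p - p) * (δ - 2) + M)
    (hdeg : p * δ ≤ M + 2 * h) (hM : M ≤ p * (s + 2)) : False := by
  zify [Nat.le_mul_self p, (by omega : 2 ≤ δ), (by omega : h ≤ δ)] at *
  have hp3 : (s : ℤ) + 3 ≤ p := by linarith
  rcases le_or_gt ((s : ℤ) + 3) δ with hsmall | hlarge
  · nlinarith [mul_le_mul_of_nonneg_right hp3 (by linarith : (0 : ℤ) ≤ δ - s - 3)]
  · have hX : (0 : ℤ) ≤ (p * p - p) * (δ - 2) := mul_nonneg (by nlinarith) (by linarith)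
    have hML : (p * δ - 2 * h : ℤ) ≤ M := by linarith
    have hLq : (q : ℤ) ≤ 2 * (p * δ - 2 * h) := by nlinarith
    -- x ↦ x² - q x is increasing for x ≥ q / 2, and p δ - 2 h ≤ M
    have hL : (p * δ - 2 * h : ℤ) ^ 2 ≤ q * ((p * p - p) * (δ - 2) + (p * δ - 2 * h)) := by
      nlinarith [mul_nonneg (sub_nonneg.mpr hML) (by linarith : (0 : ℤ) ≤ M + (p * δ - 2 * h) - q),
        mul_le_mul_of_nonneg_left hpairs (Nat.cast_nonneg q : (0 : ℤ) ≤ q)]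
    have hq' : (q : ℤ) ≤ δ + 2 - 2 * h := by linarith
    have hL' := hL.trans (mul_le_mul_of_nonneg_right hq' (by nlinarith))
    obtain rfl | rfl : h = 0 ∨ h = 1 := by omega
    · simp only [Nat.cast_zero] at hL'
      have : ((p : ℤ) * δ - 2 * 0) ^ 2 - (δ + 2 - 2 * 0) * ((p * p - p) * (δ - 2) + (p * δ - 2 * 0))
          = 2 * p * (2 * p - δ - 2) := by ring
      linarith [mul_pos (by linarith : (0 : ℤ) < 2 * p) (by linarith : (0 : ℤ) < 2 * p - δ - 2)]
    · simp only [Nat.cast_one] at hL'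
      have : ((p : ℤ) * δ - 2 * 1) ^ 2 - (δ + 2 - 2 * 1) * ((p * p - p) * (δ - 2) + (p * δ - 2 * 1))
          = 2 * δ * (p * (p - 3) + 1) + 4 := by ring
      linarith [mul_nonneg (by linarith : (0 : ℤ) ≤ δ)
        (mul_nonneg (by linarith : (0 : ℤ) ≤ p) (by linarith : (0 : ℤ) ≤ p - 3))]

theorem mmDiagnosable_of_preconnected_of_card_commonNeighbors_le [Fintype V] [DecidableEq V]
    (H : SimpleGraph V) [DecidableRel H.Adj] {δ h : ℕ} (hδ : 3 ≤ δ) (hh : 2 * h < δ)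
    (hV : 2 * (δ - h) + 3 ≤ Fintype.card V)
    (hconn : ∀ T : Finset V, #T + h < δ → (H.induce (↑T : Set V)ᶜ).Preconnected)
    (hdef : ∑ u, (δ - H.degree u) ≤ 2 * h)
    (hC : ∀ u v, u ≠ v → #(H.neighborFinset u ∩ H.neighborFinset v) ≤ δ - 2) :
    mmDiagnosable H (δ - h) := by
  intro F1 F2 hne hc1 hc2
  by_contra hnd
  set U := (F1 ∪ F2)ᶜ
  have hs : #(F1 ∩ F2) + h < δ := by
    have := card_inter_lt_of_ne hne hc1 hc2
    omega
  have hN : ∀ u ∈ U, H.neighborFinset u ⊆ F1 ∪ F2 := fun u hu v hv => by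
    by_contra hvQ
    exact not_adj_of_not_mmDistinguishable hnd hne (hconn _ hs) (mem_compl.mp hu) hvQ
      ((mem_neighborFinset _ _ _).mp hv)
  have hdegsum := sum_degree_eq_sum_card_filter_adj hN
  refine counting_contradiction (s := #(F1 ∩ F2)) (q := #(F1 ∪ F2)) (p := #U)
    (SQ := ∑ x ∈ F1 ∪ F2, #{u ∈ U | H.Adj u x} ^ 2) hδ hh hs ?_ ?_ sq_sum_le_card_mul_sum_sq
    ?_ ?_ ?_
  · have := card_union_add_card_inter F1 F2
    omega
  · have : #U + #(F1 ∪ F2) = Fintype.card V := card_compl_add_card _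
    omega
  · have hpairs := sum_card_offDiag_filter_adj_le hC U (F1 ∪ F2)
    simp only [offDiag_card] at hpairs
    have hsq : ∑ x ∈ F1 ∪ F2, #{u ∈ U | H.Adj u x} ^ 2 =
        ∑ x ∈ F1 ∪ F2, (#{u ∈ U | H.Adj u x} * #{u ∈ U | H.Adj u x} - #{u ∈ U | H.Adj u x})
          + ∑ x ∈ F1 ∪ F2, #{u ∈ U | H.Adj u x} := by
      rw [← sum_add_distrib]
      exact sum_congr rfl fun x _ => by rw [sq, Nat.sub_add_cancel (Nat.le_mul_self _)]
    omega
  · rw [← hdegsum]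
    calc #U * δ = ∑ _u ∈ U, δ := by rw [sum_const, smul_eq_mul]
      _ ≤ ∑ u ∈ U, (H.degree u + (δ - H.degree u)) := sum_le_sum fun _ _ => le_add_tsub
      _ ≤ ∑ u ∈ U, H.degree u + 2 * h := by
        rw [sum_add_distrib]
        exact Nat.add_le_add_left ((sum_le_sum_of_subset (subset_univ U)).trans hdef) _
  · rw [← hdegsum]
    calc ∑ u ∈ U, H.degree u ≤ ∑ _u ∈ U, (#(F1 ∩ F2) + 2) := sum_le_sum fun u hu =>
          degree_le_card_inter_add_two_of_not_mmDistinguishable hnd (mem_compl.mp hu) (hN u hu)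
      _ = #U * (#(F1 ∩ F2) + 2) := by rw [sum_const, smul_eq_mul]

theorem neighborFinset_deleteEdges_image_mk [Fintype V] [DecidableEq V] (G : SimpleGraph V)
    [DecidableRel G.Adj] (u : V) (W : Finset V)
    [DecidableRel (G.deleteEdges ↑(W.image (s(u, ·)))).Adj] :
    (G.deleteEdges ↑(W.image (s(u, ·)))).neighborFinset u = G.neighborFinset u \ W := by
  ext v
  simp only [mem_neighborFinset, mem_sdiff, deleteEdges_adj, coe_image, Set.mem_image,
    mem_coe, Sym2.congr_right, exists_eq_right]

theorem exists_deleteEdges_not_mmDiagnosable [Fintype V] [DecidableEq V] (G : SimpleGraph V)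
    [DecidableRel G.Adj] (u : V) {h : ℕ} (hh : h ≤ G.degree u) :
    ∃ Fe : Finset (Sym2 V), ↑Fe ⊆ G.edgeSet ∧ #Fe ≤ h ∧
      ¬ mmDiagnosable (G.deleteEdges ↑Fe) (G.degree u - h + 1) := by
  classical
  obtain ⟨W, hWN, hW⟩ := exists_subset_card_eq (s := G.neighborFinset u) (by simpa using hh)
  refine ⟨W.image (s(u, ·)), ?_, card_image_le.trans hW.le, fun hdiag => ?_⟩
  · intro e he
    obtain ⟨v, hv, rfl⟩ := mem_image.mp he
    exact (mem_neighborFinset _ _ _).mp (hWN hv)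
  have hcard : #((G.deleteEdges ↑(W.image (s(u, ·)))).neighborFinset u) = G.degree u - h := by
    rw [neighborFinset_deleteEdges_image_mk, card_sdiff_of_subset hWN,
      card_neighborFinset_eq_degree, hW]
  refine not_mmDistinguishable_neighborFinset_insert u (hdiag _ _ ?_ ?_ ?_)
  · exact fun heq => (G.deleteEdges _).notMem_neighborFinset_self u (heq ▸ mem_insert_self u _)
  · omega
  · have := card_insert_le u ((G.deleteEdges ↑(W.image (s(u, ·)))).neighborFinset u)
    omega

/-- A maximally connected graph with $δ(G) ≥ 3$, enough vertices, and
$C(G) ≤ δ(G) - 2$ has $t_h^e(G) = δ(G) - h$ under the MM* model. -/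
theorem mm_maximally_connected [Fintype V] [DecidableEq V] (G : SimpleGraph V)
    [DecidableRel G.Adj] (hmax : vConn G = G.minDegree) (hδ : 3 ≤ G.minDegree)
    (hC : ∀ u v : V, u ≠ v →
      (G.neighborFinset u ∩ G.neighborFinset v).card ≤ G.minDegree - 2)
    (h : ℕ) (hh : h ≤ (G.minDegree - 1) / 2)
    (hV : 2 * (G.minDegree - h) + 3 ≤ Fintype.card V) :
    mmTolDiag G h = G.minDegree - h := by
  classical
  have lower : ∀ Fe : Finset (Sym2 V), ↑Fe ⊆ G.edgeSet → #Fe ≤ h →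
      mmDiagnosable (G.deleteEdges ↑Fe) (G.minDegree - h) := fun Fe _ hFe =>
    mmDiagnosable_of_preconnected_of_card_commonNeighbors_le _ hδ (by omega) hV
      (fun T hT => (connected_induce_compl_deleteEdges G Fe (by omega)).preconnected)
      ((sum_minDegree_sub_degree_deleteEdges_le G Fe).trans (by omega))
      fun u v huv => (card_le_card fun x hx => by
        simp only [mem_inter, mem_neighborFinset, deleteEdges_adj] at hx ⊢
        exact ⟨hx.1.1, hx.2.1⟩).trans (hC u v huv)
  have : Nonempty V := Fintype.card_pos_iff.mp (by omega)
  obtain ⟨u, hu⟩ := G.exists_minimal_degree_vertex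
  obtain ⟨Fe, hFeE, hFe, hnot⟩ := exists_deleteEdges_not_mmDiagnosable G u (h := h) (by omega)
  refine IsGreatest.csSup_eq ⟨lower, fun s hs => ?_⟩
  by_contra! hlt
  exact hnot ((hs Fe hFeE hFe).of_le (by omega))
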